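/- Let $m, n \in \mathbb{N}$, $p \in [0,1]$, and $x \in \mathbb{Z}^d$. There is a constant $c = c(m,n)$ (independent of $d$, $p$, $x$) such that the $n$-fold convolution of the two-point function satisfies $\tau_p^{\ast n}(x) \leq c \sum_{l=0}^{m-1} p^l J^{\ast(l+n)}(x) + c \sum_{j=1}^{n} p^{m+j-n} (J^{\ast m} \ast \tau_p^{\ast j})(x)$, where $J(x) = \mathbf{1}_{\{|x|_1=1\}}$. -/

import Mathlib

/-!
Splitting an occupied path `0 ⟷ x` at its first step gives `τ ≤ J + p (J ∗ τ)`: the first vertex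
`y` is occupied with probability `p`, independently of a connection `y ⟷ x` that avoids `y` after
its last visit there, and that connection has probability `τ(x - y)` by translation invariance.
With `a(s, j) = (J^{*s} ∗ τ^{*j})(x)` this reads `a(s, j+1) ≤ a(s+1, j) + p a(s+1, j+1)`.
Iterating it `m` times from `a(0, n)` follows at most `2^m` histories, each step either lowering `j`
or paying a factor `p`: a history either reaches `j = 0` after `l < m` payments, leaving
`p^l J^{*(l+n)}(x)`, or ends at `p^{m+j-n} a(m, j)`. Where `m + j < n` the integer power
`p^{m+j-n}` is at least `1` because `p ≤ 1`, so the truncated natural exponent is enough.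
-/

open MeasureTheory
open scoped ENNReal NNReal

/-- Vertices of the hypercubic lattice `ℤ^d`. -/
abbrev Vertex (d : ℕ) := Fin d → ℤ

/-- A site-percolation configuration: each vertex is occupied (`true`) or vacant. -/
abbrev Config (d : ℕ) := Vertex d → Bool

/-- The ℓ¹ norm `|x|₁ = ∑ᵢ |xᵢ|`. -/
def dist1 {d : ℕ} (x : Vertex d) : ℕ := ∑ i, (x i).natAbs

/-- Nearest neighbours. -/
def IsNbr {d : ℕ} (x y : Vertex d) : Prop := dist1 (x - y) = 1

/-- `ConnIn ω S l x y`: `x` is connected to `y` by a nearest-neighbour path with at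
least `l` edges all of whose internal vertices are occupied in `ω` and lie in `S`. -/
def ConnIn {d : ℕ} (ω : Config d) (S : Set (Vertex d)) (l : ℕ) (x y : Vertex d) : Prop :=
  x ≠ y ∧ ∃ (k : ℕ) (γ : ℕ → Vertex d), l ≤ k ∧ γ 0 = x ∧ γ k = y ∧
    (∀ i < k, IsNbr (γ i) (γ (i + 1))) ∧
    ∀ i, 0 < i → i < k → (ω (γ i) = true ∧ γ i ∈ S)

/-- `x ⟷ y` : connection by an occupied path. -/
def Conn {d : ℕ} (ω : Config d) (x y : Vertex d) : Prop := ConnIn ω Set.univ 1 x y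

/-- `μ` is the law of i.i.d. Bernoulli(`p`) site percolation on `ℤ^d`. -/
def IsBernoulli (d : ℕ) (p : ℝ) (μ : Measure (Config d)) : Prop :=
  IsProbabilityMeasure μ ∧
  ∀ (s : Finset (Vertex d)) (b : Vertex d → Bool),
    μ {ω | ∀ v ∈ s, ω v = b v} = ∏ v ∈ s, ENNReal.ofReal (if b v then p else 1 - p)

/-- The two-point function `τ_p(x)`. -/
noncomputable def tau {d : ℕ} (μ : Measure (Config d)) (x : Vertex d) : ℝ≥0∞ :=
  μ {ω | Conn ω 0 x}

/-- `τ_p^{(l)}(x)`: probability of a connection using at least `l` edges. -/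
noncomputable def tauL {d : ℕ} (μ : Measure (Config d)) (l : ℕ) (x : Vertex d) : ℝ≥0∞ :=
  μ {ω | ConnIn ω Set.univ l 0 x}

/-- `J(x) = 𝟙{|x|₁ = 1}` (ℝ≥0∞-valued). -/
noncomputable def Jfun {d : ℕ} (x : Vertex d) : ℝ≥0∞ := if dist1 x = 1 then 1 else 0

/-- `m`-fold convolution `J^{*m}` (ℝ≥0∞-valued). -/
noncomputable def Jpow {d : ℕ} : ℕ → Vertex d → ℝ≥0∞
  | 0, x => if x = 0 then 1 else 0
  | m + 1, x => ∑' y, Jfun y * Jpow m (x - y)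

/-- `n`-fold convolution `τ_p^{*n}`. -/
noncomputable def taupow {d : ℕ} (μ : Measure (Config d)) : ℕ → Vertex d → ℝ≥0∞
  | 0, x => if x = 0 then 1 else 0
  | n + 1, x => ∑' y, tau μ y * taupow μ n (x - y)

section Paths

variable {d : ℕ} {ω ω' : Config d} {S T : Set (Vertex d)} {l : ℕ} {a b x y : Vertex d}

theorem dist1_neg (x : Vertex d) : dist1 (-x) = dist1 x := by
  simp [dist1]

theorem isNbr_zero_left : IsNbr 0 y ↔ dist1 y = 1 := by
  rw [IsNbr, zero_sub, dist1_neg]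

theorem IsNbr.sub_right (h : IsNbr a b) (y : Vertex d) : IsNbr (a - y) (b - y) := by
  rwa [IsNbr, sub_sub_sub_cancel_right]

theorem ConnIn.mono (hST : S ⊆ T) (hω : ∀ v ∈ S, ω v = true → ω' v = true)
    (h : ConnIn ω S l a b) : ConnIn ω' T l a b := by
  obtain ⟨hab, k, γ, hk, h0, hγk, hnbr, hint⟩ := h
  exact ⟨hab, k, γ, hk, h0, hγk, hnbr, fun i hi hik =>
    ⟨hω _ (hint i hi hik).2 (hint i hi hik).1, hST (hint i hi hik).2⟩⟩

theorem ConnIn.exists_finset (h : ConnIn ω S l a b) :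
    ∃ F : Finset (Vertex d), ConnIn (fun v => decide (v ∈ F)) S l a b ∧ ∀ v ∈ F, ω v = true := by
  obtain ⟨hab, k, γ, hk, h0, hγk, hnbr, hint⟩ := h
  refine ⟨((Finset.range k).image γ).filter (ω · = true), ⟨hab, k, γ, hk, h0, hγk, hnbr,
    fun i hi hik => ⟨?_, (hint i hi hik).2⟩⟩, fun v hv => (Finset.mem_filter.mp hv).2⟩
  simpa using ⟨⟨i, hik, rfl⟩, (hint i hi hik).1⟩

theorem Conn.exists_nbr (h : Conn ω a x) (hax : ¬ IsNbr a x) :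
    ∃ y, IsNbr a y ∧ ω y = true ∧ Conn ω y x := by
  obtain ⟨-, k, γ, hk, h0, hγk, hnbr, hint⟩ := h
  have hfirst : IsNbr a (γ 1) := h0 ▸ hnbr 0 hk
  have hk2 : 2 ≤ k := by
    by_contra! hk2
    obtain rfl : k = 1 := by omega
    exact hax (hγk ▸ hfirst)
  refine ⟨γ 1, hfirst, (hint 1 one_pos hk2).1, fun h1x => hax (h1x ▸ hfirst),
    k - 1, fun i => γ (i + 1), by omega, rfl, by dsimp only; rwa [Nat.sub_add_cancel hk],
    fun i hi => hnbr (i + 1) (by omega), fun i hi hik => ⟨(hint (i + 1) (by omega) (by omega)).1,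
      Set.mem_univ _⟩⟩

/-- A path from `y` can be cut at its last visit to `y`. -/
theorem Conn.connIn_compl_singleton (h : Conn ω y x) : ConnIn ω {y}ᶜ 1 y x := by
  classical
  obtain ⟨hyx, k, γ, hk, h0, hγk, hnbr, hint⟩ := h
  set i₀ := Nat.findGreatest (fun i => γ i = y) (k - 1)
  have hi₀ : γ i₀ = y := Nat.findGreatest_spec (P := fun i => γ i = y) (Nat.zero_le _) h0
  have hi₀k : i₀ < k := by have := Nat.findGreatest_le (P := fun i => γ i = y) (k - 1); omega
  refine ⟨hyx, k - i₀, fun i => γ (i₀ + i), by omega, hi₀,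
    by dsimp only; rwa [Nat.add_sub_cancel' hi₀k.le], fun i hi => hnbr (i₀ + i) (by omega),
    fun i hi hik => ⟨(hint (i₀ + i) (by omega) (by omega)).1, ?_⟩⟩
  exact Nat.findGreatest_is_greatest (P := fun i => γ i = y) (n := k - 1) (by omega) (by omega)

theorem Conn.translate (h : Conn ω a b) (y : Vertex d) :
    Conn (fun v => ω (v + y)) (a - y) (b - y) := by
  obtain ⟨hab, k, γ, hk, h0, hγk, hnbr, hint⟩ := h
  refine ⟨fun h => hab (sub_left_inj.mp h), k, fun i => γ i - y, hk, by dsimp only; rw [h0],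
    by dsimp only; rw [hγk], fun i hi => (hnbr i hi).sub_right y,
    fun i hi hik => ⟨?_, Set.mem_univ _⟩⟩
  simpa using (hint i hi hik).1

theorem conn_translate_iff : Conn (fun v => ω (v + y)) 0 (x - y) ↔ Conn ω y x := by
  refine ⟨fun h => ?_, fun h => sub_self y ▸ h.translate y⟩
  simpa using h.translate (-y)

end Paths

section Convolution

variable {G : Type*} [AddCommGroup G]

noncomputable def conv (f g : G → ℝ≥0∞) : G → ℝ≥0∞ := fun x => ∑' y, f y * g (x - y)

theorem conv_apply (f g : G → ℝ≥0∞) (x : G) : conv f g x = ∑' y, f y * g (x - y) := rfl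

theorem conv_comm (f g : G → ℝ≥0∞) : conv f g = conv g f := by
  funext x
  rw [conv_apply, ← (Equiv.subLeft x).tsum_eq]
  simp [conv_apply, mul_comm]

theorem conv_assoc (f g h : G → ℝ≥0∞) : conv (conv f g) h = conv f (conv g h) := by
  funext x
  calc ∑' z, (∑' y, f y * g (z - y)) * h (x - z)
      = ∑' y, ∑' z, f y * g (z - y) * h (x - z) := by
        simp_rw [← ENNReal.tsum_mul_right]; exact ENNReal.tsum_comm
    _ = ∑' y, ∑' w, f y * (g w * h (x - y - w)) := by
        refine tsum_congr fun y => ?_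
        rw [← (Equiv.addLeft y).tsum_eq]
        simp [sub_sub, mul_assoc]
    _ = conv f (conv g h) x := by simp_rw [conv_apply, ENNReal.tsum_mul_left]

theorem conv_mono {f f' g g' : G → ℝ≥0∞} (hf : f ≤ f') (hg : g ≤ g') : conv f g ≤ conv f' g' :=
  fun x => ENNReal.tsum_le_tsum fun y => mul_le_mul' (hf y) (hg (x - y))

theorem add_conv (f g h : G → ℝ≥0∞) : conv (f + g) h = conv f h + conv g h := by
  funext x
  simp only [conv_apply, Pi.add_apply, add_mul, ENNReal.tsum_add]

theorem smul_conv (c : ℝ≥0∞) (f g : G → ℝ≥0∞) : conv (c • f) g = c • conv f g := by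
  funext x
  simp only [conv_apply, Pi.smul_apply, smul_eq_mul, mul_assoc, ENNReal.tsum_mul_left]

theorem conv_add (f g h : G → ℝ≥0∞) : conv f (g + h) = conv f g + conv f h := by
  simp only [conv_comm f, add_conv]

theorem conv_smul (c : ℝ≥0∞) (f g : G → ℝ≥0∞) : conv f (c • g) = c • conv f g := by
  simp only [conv_comm f, smul_conv]

variable [DecidableEq G]

theorem ite_zero_conv (f : G → ℝ≥0∞) : conv (fun y => if y = 0 then 1 else 0) f = f := by
  funext x
  rw [conv_apply, tsum_eq_single 0 fun y hy => by simp [hy]]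
  simp

theorem conv_ite_zero (f : G → ℝ≥0∞) : conv f (fun y => if y = 0 then 1 else 0) = f := by
  rw [conv_comm, ite_zero_conv]

end Convolution

section Expansion

open Finset

variable {R : Type*} [CommSemiring R] [PartialOrder R] [CanonicallyOrderedAdd R] [IsOrderedRing R]
  {q : R} {a : ℕ → ℕ → R}

def expansionBound (q : R) (a : ℕ → ℕ → R) (m s n : ℕ) : R :=
  ∑ l ∈ range m, q ^ l * a (s + l + n) 0 + ∑ j ∈ Icc 1 n, q ^ (m + j - n) * a (s + m) j

theorem le_expansionBound_zero {s n : ℕ} (hn : 1 ≤ n) : a s n ≤ expansionBound q a 0 s n := by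
  refine le_add_left ?_
  simpa using single_le_sum (f := fun j => q ^ (j - n) * a s j) (fun _ _ => zero_le)
    (mem_Icc.mpr ⟨hn, le_rfl⟩)

theorem le_expansionBound_succ_one (m s : ℕ) : a (s + 1) 0 ≤ expansionBound q a (m + 1) s 1 := by
  refine le_add_right ?_
  simpa using single_le_sum (f := fun l => q ^ l * a (s + l + 1) 0) (fun _ _ => zero_le)
    (mem_range.mpr m.succ_pos)

theorem expansionBound_le_succ_succ (m s k : ℕ) :
    expansionBound q a m (s + 1) k ≤ expansionBound q a (m + 1) s (k + 1) := by
  refine add_le_add ?_ ?_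
  · refine le_trans (le_of_eq (sum_congr rfl fun l _ => ?_))
      (sum_le_sum_of_subset (range_subset_range.mpr m.le_succ))
    ring_nf
  · refine le_trans (le_of_eq (sum_congr rfl fun j _ => ?_))
      (sum_le_sum_of_subset (Icc_subset_Icc_right k.le_succ))
    rw [show m + j - k = m + 1 + j - (k + 1) by omega, show s + 1 + m = s + (m + 1) by omega]

theorem mul_expansionBound_le_succ (hq : q ≤ 1) (m s n : ℕ) :
    q * expansionBound q a m (s + 1) n ≤ expansionBound q a (m + 1) s n := by
  rw [expansionBound, mul_add, mul_sum, mul_sum]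
  refine add_le_add ?_ (sum_le_sum fun j _ => ?_)
  · rw [sum_range_succ']
    refine le_add_right (le_of_eq (sum_congr rfl fun l _ => ?_))
    ring_nf
  · rw [← mul_assoc, ← pow_succ', show s + 1 + m = s + (m + 1) by omega]
    exact mul_le_mul_left (pow_le_pow_right_of_le_one' hq (by omega)) _

theorem le_two_pow_mul_expansionBound (hq : q ≤ 1)
    (ha : ∀ s j, a s (j + 1) ≤ a (s + 1) j + q * a (s + 1) (j + 1)) (m : ℕ) {s n : ℕ}
    (hn : 1 ≤ n) : a s n ≤ 2 ^ m * expansionBound q a m s n := by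
  induction m generalizing s n with
  | zero => simpa using le_expansionBound_zero hn
  | succ m ih =>
    obtain ⟨k, rfl⟩ := Nat.exists_eq_add_of_le' hn
    have hvacant : a (s + 1) k ≤ 2 ^ m * expansionBound q a (m + 1) s (k + 1) := by
      rcases Nat.eq_zero_or_pos k with rfl | hk
      · exact (le_expansionBound_succ_one m s).trans
          (le_mul_of_one_le_left zero_le (one_le_pow₀ one_le_two))
      · exact (ih hk).trans (mul_le_mul_right (expansionBound_le_succ_succ m s k) _)
    have hoccupied : q * a (s + 1) (k + 1) ≤ 2 ^ m * expansionBound q a (m + 1) s (k + 1) :=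
      calc q * a (s + 1) (k + 1) ≤ 2 ^ m * (q * expansionBound q a m (s + 1) (k + 1)) := by
            rw [mul_left_comm]; exact mul_le_mul_right (ih k.succ_pos) q
        _ ≤ _ := mul_le_mul_right (mul_expansionBound_le_succ hq m s (k + 1)) _
    calc a s (k + 1) ≤ a (s + 1) k + q * a (s + 1) (k + 1) := ha s k
      _ ≤ 2 ^ (m + 1) * expansionBound q a (m + 1) s (k + 1) := by
        rw [pow_succ, mul_two, add_mul]; exact add_le_add hvacant hoccupied

end Expansion

section ConvolutionPowers

variable {d : ℕ} {μ : Measure (Config d)} {q : ℝ≥0∞}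

theorem Jpow_zero : (Jpow 0 : Vertex d → ℝ≥0∞) = fun x => if x = 0 then 1 else 0 := rfl

theorem Jpow_succ (m : ℕ) : (Jpow (m + 1) : Vertex d → ℝ≥0∞) = conv Jfun (Jpow m) := rfl

theorem taupow_zero : taupow μ 0 = fun x => if x = 0 then 1 else 0 := rfl

theorem taupow_succ (n : ℕ) : taupow μ (n + 1) = conv (tau μ) (taupow μ n) := rfl

theorem conv_Jpow_conv_Jfun (s : ℕ) (f : Vertex d → ℝ≥0∞) :
    conv (Jpow s) (conv Jfun f) = conv (Jpow (s + 1)) f := by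
  rw [← conv_assoc, conv_comm (Jpow s), Jpow_succ]

theorem taupow_succ_le (hτ : tau μ ≤ Jfun + q • conv Jfun (tau μ)) (j : ℕ) :
    taupow μ (j + 1) ≤ conv Jfun (taupow μ j) + q • conv Jfun (taupow μ (j + 1)) :=
  calc taupow μ (j + 1) ≤ conv (Jfun + q • conv Jfun (tau μ)) (taupow μ j) :=
        conv_mono hτ le_rfl
    _ = conv Jfun (taupow μ j) + q • conv Jfun (taupow μ (j + 1)) := by
        rw [add_conv, smul_conv, conv_assoc, taupow_succ]

theorem conv_Jpow_taupow_succ_le (hτ : tau μ ≤ Jfun + q • conv Jfun (tau μ)) (s j : ℕ) :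
    conv (Jpow s) (taupow μ (j + 1)) ≤
      conv (Jpow (s + 1)) (taupow μ j) + q • conv (Jpow (s + 1)) (taupow μ (j + 1)) :=
  calc conv (Jpow s) (taupow μ (j + 1))
      ≤ conv (Jpow s) (conv Jfun (taupow μ j) + q • conv Jfun (taupow μ (j + 1))) :=
        conv_mono le_rfl (taupow_succ_le hτ j)
    _ = _ := by rw [conv_add, conv_smul, conv_Jpow_conv_Jfun, conv_Jpow_conv_Jfun]

theorem taupow_le_of_tau_le (hq : q ≤ 1) (hτ : tau μ ≤ Jfun + q • conv Jfun (tau μ))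
    (m : ℕ) {n : ℕ} (hn : 1 ≤ n) (x : Vertex d) :
    taupow μ n x ≤ 2 ^ m * (∑ l ∈ Finset.range m, q ^ l * Jpow (l + n) x +
      ∑ j ∈ Finset.Icc 1 n, q ^ (m + j - n) * conv (Jpow m) (taupow μ j) x) := by
  have h := le_two_pow_mul_expansionBound (a := fun s j => conv (Jpow s) (taupow μ j) x) hq
    (fun s j => conv_Jpow_taupow_succ_le hτ s j x) m (s := 0) hn
  simpa only [expansionBound, Jpow_zero, ite_zero_conv, taupow_zero, conv_ite_zero, zero_add]
    using h

end ConvolutionPowers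

section Cylinders

variable {ι : Type*}

def cyl (s : Finset ι) (b : ι → Bool) : Set (ι → Bool) := {ω | ∀ v ∈ s, ω v = b v}

theorem measurableSet_cyl (s : Finset ι) (b : ι → Bool) : MeasurableSet (cyl s b) := by
  simp only [cyl, Set.ofPred_forall]
  exact s.measurableSet_biInter fun v _ =>
    measurableSet_eq_fun (measurable_pi_apply v) measurable_const

theorem isPiSystem_cyl : IsPiSystem {A : Set (ι → Bool) | ∃ s b, cyl s b = A} := by
  classical
  rintro _ ⟨s, b, rfl⟩ _ ⟨t, c, rfl⟩ ⟨ω, hωb, hωc⟩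
  refine ⟨s ∪ t, ω, Set.ext fun ω' => ?_⟩
  simp only [cyl, Finset.mem_union, Set.mem_inter_iff, Set.mem_ofPred_eq] at hωb hωc ⊢
  constructor
  · rintro h
    exact ⟨fun v hv => (h v (.inl hv)).trans (hωb v hv),
      fun v hv => (h v (.inr hv)).trans (hωc v hv)⟩
  · rintro ⟨hb, hc⟩ v (hv | hv)
    · exact (hb v hv).trans (hωb v hv).symm
    · exact (hc v hv).trans (hωc v hv).symm

theorem generateFrom_cyl :
    MeasurableSpace.generateFrom {A : Set (ι → Bool) | ∃ s b, cyl s b = A} =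
      MeasurableSpace.pi := by
  refine le_antisymm (MeasurableSpace.generateFrom_le ?_) ?_
  · rintro _ ⟨s, b, rfl⟩
    exact measurableSet_cyl s b
  · let := MeasurableSpace.generateFrom {A : Set (ι → Bool) | ∃ s b, cyl s b = A}
    have hid : @Measurable _ _ this MeasurableSpace.pi (id : (ι → Bool) → ι → Bool) :=
      measurable_pi_iff.mpr fun v => measurable_to_countable' fun c =>
        MeasurableSpace.measurableSet_generateFrom ⟨{v}, fun _ => c, by ext; simp [cyl]⟩
    exact fun A hA => hid hA

theorem ext_of_cyl {μ ν : Measure (ι → Bool)} [IsFiniteMeasure μ]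
    (h : ∀ s b, μ (cyl s b) = ν (cyl s b)) : μ = ν :=
  ext_of_generate_finite _ generateFrom_cyl.symm isPiSystem_cyl
    (by rintro _ ⟨s, b, rfl⟩; exact h s b)
    (by simpa [cyl] using h ∅ fun _ => true)

theorem update_false_preimage_cyl [DecidableEq ι] (y : ι) (s : Finset ι) (b : ι → Bool) :
    (fun ω => Function.update ω y false) ⁻¹' cyl s b =
      if y ∈ s ∧ b y = true then ∅ else cyl (s.erase y) b := by
  ext ω
  split_ifs with hb
  · simpa [cyl] using ⟨y, hb.1, by simp [hb.2]⟩
  · simp only [cyl, Set.mem_preimage, Set.mem_ofPred_eq, Finset.mem_erase]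
    refine ⟨fun h v ⟨hvy, hv⟩ => by simpa [hvy] using h v hv, fun h v hv => ?_⟩
    by_cases hvy : v = y
    · subst hvy
      simpa using fun h => hb ⟨hv, h⟩
    · simpa [hvy] using h v ⟨hvy, hv⟩

end Cylinders

section Bernoulli

variable {d : ℕ} {p : ℝ} {μ : Measure (Config d)}

theorem measurableSet_connIn (S : Set (Vertex d)) (l : ℕ) (a b : Vertex d) :
    MeasurableSet {ω : Config d | ConnIn ω S l a b} := by
  have h : {ω : Config d | ConnIn ω S l a b} =
      ⋃ F ∈ {F : Finset (Vertex d) | ConnIn (fun v => decide (v ∈ F)) S l a b},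
        cyl F fun _ => true := by
    ext ω
    simp only [Set.mem_ofPred_eq, Set.mem_iUnion, cyl, exists_prop]
    refine ⟨ConnIn.exists_finset, fun ⟨F, hF, hω⟩ => hF.mono subset_rfl fun v _ hv => hω v ?_⟩
    simpa using hv
  rw [h]
  exact .biUnion (Set.to_countable _) fun F _ => measurableSet_cyl F _

theorem IsBernoulli.measure_cyl (hμ : IsBernoulli d p μ) (s : Finset (Vertex d))
    (b : Vertex d → Bool) :
    μ (cyl s b) = ∏ v ∈ s, ENNReal.ofReal (if b v then p else 1 - p) :=
  hμ.2 s b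

theorem IsBernoulli.map_shift (hμ : IsBernoulli d p μ) (y : Vertex d) :
    μ.map (fun ω v => ω (v + y)) = μ := by
  have := hμ.1
  have hshift : Measurable (fun (ω : Config d) v => ω (v + y)) := by fun_prop
  refine ext_of_cyl fun s b => ?_
  have hpre : (fun (ω : Config d) v => ω (v + y)) ⁻¹' cyl s b =
      cyl (s.map (addRightEmbedding y)) fun w => b (w - y) := by
    ext ω
    simp [cyl]
  rw [Measure.map_apply hshift (measurableSet_cyl s b), hpre, hμ.measure_cyl, hμ.measure_cyl,
    Finset.prod_map]
  simp

theorem IsBernoulli.measure_cyl_inter_eq_true (hμ : IsBernoulli d p μ) {y : Vertex d}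
    {s : Finset (Vertex d)} (hy : y ∉ s) (b : Vertex d → Bool) :
    μ (cyl s b ∩ {ω | ω y = true}) = ENNReal.ofReal p * μ (cyl s b) := by
  have hins : cyl s b ∩ {ω | ω y = true} = cyl (insert y s) (Function.update b y true) := by
    ext ω
    simp only [cyl, Set.mem_inter_iff, Set.mem_ofPred_eq, Finset.forall_mem_insert,
      Function.update_self, and_comm]
    refine and_congr_right fun _ => forall₂_congr fun v hv => ?_
    rw [Function.update_of_ne (ne_of_mem_of_not_mem hv hy)]
  rw [hins, hμ.measure_cyl, hμ.measure_cyl, Finset.prod_insert hy, Function.update_self,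
    if_pos rfl]
  congr 1
  exact Finset.prod_congr rfl fun v hv => by
    rw [Function.update_of_ne (ne_of_mem_of_not_mem hv hy)]

theorem IsBernoulli.measure_inter_eq_true (hμ : IsBernoulli d p μ) {y : Vertex d}
    {A : Set (Config d)} (hA : MeasurableSet A)
    (hinv : (fun ω => Function.update ω y false) ⁻¹' A = A) :
    μ (A ∩ {ω | ω y = true}) = ENNReal.ofReal p * μ A := by
  have := hμ.1
  have hu : Measurable fun ω : Config d => Function.update ω y false := by fun_prop
  have hy : MeasurableSet {ω : Config d | ω y = true} :=
    measurableSet_eq_fun (measurable_pi_apply y) measurable_const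
  -- `A` is a preimage under resetting `y`, so it suffices to compare the two images of `μ` under
  -- that reset, and these agree on cylinders.
  have key : (μ.restrict {ω | ω y = true}).map (fun ω => Function.update ω y false) =
      ENNReal.ofReal p • μ.map (fun ω => Function.update ω y false) := by
    refine ext_of_cyl fun s b => ?_
    rw [Measure.map_apply hu (measurableSet_cyl s b), Measure.restrict_apply' hy,
      Measure.smul_apply, Measure.map_apply hu (measurableSet_cyl s b), smul_eq_mul,
      update_false_preimage_cyl]
    split_ifs
    · simp
    · exact hμ.measure_cyl_inter_eq_true (Finset.notMem_erase y s) b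
  simpa only [Measure.map_apply hu hA, hinv, Measure.restrict_apply hA, Measure.smul_apply,
    smul_eq_mul] using congrArg (· A) key

theorem IsBernoulli.measure_conn (hμ : IsBernoulli d p μ) (y x : Vertex d) :
    μ {ω | Conn ω y x} = tau μ (x - y) := by
  have hshift : Measurable (fun (ω : Config d) v => ω (v + y)) := by fun_prop
  have hpre : {ω : Config d | Conn ω y x} =
      (fun ω v => ω (v + y)) ⁻¹' {ω : Config d | Conn ω 0 (x - y)} := by
    ext ω
    exact conn_translate_iff.symm
  have hconn : MeasurableSet {ω : Config d | Conn ω 0 (x - y)} := measurableSet_connIn _ _ _ _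
  rw [hpre, ← Measure.map_apply hshift hconn, hμ.map_shift, tau]

theorem IsBernoulli.measure_occupied_conn_le (hμ : IsBernoulli d p μ) (y x : Vertex d) :
    μ {ω | ω y = true ∧ Conn ω y x} ≤ ENNReal.ofReal p * tau μ (x - y) := by
  have hinv : (fun ω => Function.update ω y false) ⁻¹' {ω : Config d | ConnIn ω {y}ᶜ 1 y x} =
      {ω | ConnIn ω {y}ᶜ 1 y x} := by
    ext ω
    have hagree : ∀ v ∈ ({y}ᶜ : Set (Vertex d)), Function.update ω y false v = ω v :=
      fun v hv => Function.update_of_ne hv _ _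
    exact ⟨ConnIn.mono subset_rfl fun v hv => by rw [hagree v hv]; exact id,
      ConnIn.mono subset_rfl fun v hv => by rw [hagree v hv]; exact id⟩
  calc μ {ω | ω y = true ∧ Conn ω y x}
      ≤ μ ({ω | ConnIn ω {y}ᶜ 1 y x} ∩ {ω | ω y = true}) :=
        measure_mono fun ω ⟨hy, hconn⟩ => ⟨hconn.connIn_compl_singleton, hy⟩
    _ = ENNReal.ofReal p * μ {ω | ConnIn ω {y}ᶜ 1 y x} :=
        hμ.measure_inter_eq_true (measurableSet_connIn _ _ _ _) hinv
    _ ≤ ENNReal.ofReal p * μ {ω | Conn ω y x} :=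
        mul_le_mul_right (measure_mono fun _ => ConnIn.mono (Set.subset_univ _) fun _ _ => id) _
    _ = ENNReal.ofReal p * tau μ (x - y) := by rw [hμ.measure_conn]

theorem IsBernoulli.tau_le (hμ : IsBernoulli d p μ) :
    tau μ ≤ Jfun + ENNReal.ofReal p • conv Jfun (tau μ) := by
  have := hμ.1
  intro x
  simp only [Pi.add_apply, Pi.smul_apply, smul_eq_mul]
  by_cases hx : dist1 x = 1
  · rw [Jfun, if_pos hx]
    exact prob_le_one.trans le_self_add
  refine le_add_left ?_
  have hcover : {ω : Config d | Conn ω 0 x} ⊆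
      ⋃ y ∈ {y : Vertex d | dist1 y = 1}, {ω | ω y = true ∧ Conn ω y x} := by
    intro ω hω
    obtain ⟨y, hy, hωy, hyx⟩ := Conn.exists_nbr hω (isNbr_zero_left.not.mpr hx)
    exact Set.mem_biUnion (isNbr_zero_left.mp hy) ⟨hωy, hyx⟩
  calc tau μ x ≤ ∑' y : {y : Vertex d | dist1 y = 1}, μ {ω | ω y = true ∧ Conn ω y x} :=
        (measure_mono hcover).trans (measure_biUnion_le _ (Set.to_countable _) _)
    _ = ∑' y, {y | dist1 y = 1}.indicator (fun y => μ {ω | ω y = true ∧ Conn ω y x}) y :=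
        _root_.tsum_subtype {y : Vertex d | dist1 y = 1}
          fun y => μ {ω | ω y = true ∧ Conn ω y x}
    _ ≤ ∑' y, Jfun y * (ENNReal.ofReal p * tau μ (x - y)) := by
        refine ENNReal.tsum_le_tsum fun y => ?_
        by_cases hy : dist1 y = 1
        · simpa [Jfun, hy] using hμ.measure_occupied_conn_le y x
        · simp [Jfun, hy]
    _ = ENNReal.ofReal p * conv Jfun (tau μ) x := by
        rw [conv_apply, ← ENNReal.tsum_mul_left]
        exact tsum_congr fun y => mul_left_comm _ _ _

end Bernoulli

theorem ENNReal.pow_sub_le_zpow {q : ℝ≥0∞} (hq : q ≤ 1) (a b : ℕ) :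
    q ^ (a - b) ≤ q ^ ((a : ℤ) - b) := by
  rcases le_total b a with hba | hab
  · rw [← Nat.cast_sub hba, zpow_natCast]
  · rw [Nat.sub_eq_zero_of_le hab, pow_zero, ← neg_sub, ← Nat.cast_sub hab]
    rcases (b - a).eq_zero_or_pos with h | h
    · simp [h]
    · rw [zpow_neg_coe_of_pos _ h]
      exact ENNReal.one_le_inv.mpr (pow_le_one₀ zero_le hq)

theorem taupow_expansion_general (m n : ℕ) (hn : 1 ≤ n) :
    ∃ c : ℝ≥0, ∀ (d : ℕ) (p : ℝ), 0 ≤ p → p ≤ 1 →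
      ∀ μ : Measure (Config d), IsBernoulli d p μ → ∀ x : Vertex d,
        taupow μ n x ≤
          (c : ℝ≥0∞) * ∑ l ∈ Finset.range m, ENNReal.ofReal p ^ l * Jpow (l + n) x +
          (c : ℝ≥0∞) * ∑ j ∈ Finset.Icc 1 n,
            ENNReal.ofReal p ^ ((m : ℤ) + (j : ℤ) - (n : ℤ)) *
              ∑' y, Jpow m y * taupow μ j (x - y) := by
  refine ⟨2 ^ m, fun d p _ hp1 μ hμ x => ?_⟩
  have hq : ENNReal.ofReal p ≤ 1 := ENNReal.ofReal_le_one.mpr hp1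
  refine (taupow_le_of_tau_le hq hμ.tau_le m hn x).trans ?_
  push_cast
  rw [mul_add]
  gcongr with j
  · rw [← Nat.cast_add]
    exact ENNReal.pow_sub_le_zpow hq _ _
  · rfl

/-- for `m, n ≥ 1` there is a constant `c = c(m,n)`, independent of `d`, `p`
and `x`, with
`τ_p^{*n}(x) ≤ c ∑_{l<m} p^l J^{*(l+n)}(x) + c ∑_{j=1}^n p^{m+j-n} (J^{*m} ∗ τ_p^{*j})(x)`. -/
theorem taupow_expansion (m n : ℕ) (hm : 1 ≤ m) (hn : 1 ≤ n) :
    ∃ c : ℝ≥0, ∀ (d : ℕ) (p : ℝ), 0 ≤ p → p ≤ 1 →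
      ∀ μ : Measure (Config d), IsBernoulli d p μ → ∀ x : Vertex d,
        taupow μ n x ≤
          (c : ℝ≥0∞) * ∑ l ∈ Finset.range m, ENNReal.ofReal p ^ l * Jpow (l + n) x +
          (c : ℝ≥0∞) * ∑ j ∈ Finset.Icc 1 n,
            ENNReal.ofReal p ^ ((m : ℤ) + (j : ℤ) - (n : ℤ)) *
              ∑' y, Jpow m y * taupow μ j (x - y) :=
  taupow_expansion_general m n hn
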